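/- Let a₀, a₁, a₂, a₃ be smooth real functions on an open interval J, let f, g : J → ℝ be smooth solutions of y'''' + a₃y''' + a₂y'' + a₁y' + a₀y = 0, and let u₁,…,u₆ be the six Wronskians of (f,g). Set U = u₁‴ + a₃u₁″ + a₂u₁′ + a₁u₁ and C₁ = a₃′ + (1/2)a₃² − 2a₂. Then on J: (i) U = a₃u₄ + 2u₅, and (ii) U′ + (1/2)a₃U = C₁u₄ + 2a₀u₁ + 2u₆. -/

import Mathlib

/-!
Write `W i j = f⁽ⁱ⁾ g⁽ʲ⁾ - f⁽ʲ⁾ g⁽ⁱ⁾`, so that `u₁ = W 0 1`, `u₄ = W 1 2`, `u₅ = W 1 3`,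
`u₆ = W 2 3`. By the Leibniz rule `(W i j)' = W (i+1) j + W i (j+1)`, and `W i i = 0`, hence
`u₁' = W 0 2`, `u₁'' = W 0 3 + W 1 2` and `u₁''' = W 0 4 + 2 W 1 3`. Since `f` and `g` solve the
same equation, `W i 4 = -(a₃ W i 3 + a₂ W i 2 + a₁ W i 1 + a₀ W i 0)`. Substituting this with
`i = 0` into `U` gives (i); differentiating (i) and substituting it with `i = 1` gives (ii).
-/

open Set

noncomputable def wronskian (i j : ℕ) (f g : ℝ → ℝ) (t : ℝ) : ℝ :=
  iteratedDeriv i f t * iteratedDeriv j g t - iteratedDeriv j f t * iteratedDeriv i g t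

section Wronskian

variable {S : Set ℝ} {f g : ℝ → ℝ} {t : ℝ}

theorem wronskian_self (i : ℕ) : wronskian i i f g = 0 := by
  funext t
  simp only [wronskian, sub_self, Pi.zero_apply]

theorem wronskian_swap (i j : ℕ) : wronskian j i f g = -wronskian i j f g := by
  funext t
  simp only [wronskian, Pi.neg_apply]
  ring

theorem ContDiffOn.iteratedDeriv_of_isOpen (hS : IsOpen S) (hf : ContDiffOn ℝ (⊤ : ℕ∞) f S)
    (n : ℕ) : ContDiffOn ℝ (⊤ : ℕ∞) (iteratedDeriv n f) S := by
  induction n with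
  | zero => simpa only [iteratedDeriv_zero] using hf
  | succ n ih =>
    rw [iteratedDeriv_succ]
    exact ih.deriv_of_isOpen hS (by exact_mod_cast le_top)

theorem ContDiffOn.hasDerivAt_iteratedDeriv (hS : IsOpen S) (hf : ContDiffOn ℝ (⊤ : ℕ∞) f S)
    (n : ℕ) (ht : t ∈ S) : HasDerivAt (iteratedDeriv n f) (iteratedDeriv (n + 1) f t) t := by
  rw [iteratedDeriv_succ]
  exact (((hf.iteratedDeriv_of_isOpen hS n).differentiableOn (by simp) t ht).differentiableAt
    (hS.mem_nhds ht)).hasDerivAt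

theorem hasDerivAt_wronskian (hS : IsOpen S) (hf : ContDiffOn ℝ (⊤ : ℕ∞) f S)
    (hg : ContDiffOn ℝ (⊤ : ℕ∞) g S) (i j : ℕ) (ht : t ∈ S) :
    HasDerivAt (wronskian i j f g)
      (wronskian (i + 1) j f g t + wronskian i (j + 1) f g t) t := by
  have hfi := hf.hasDerivAt_iteratedDeriv hS i ht
  have hfj := hf.hasDerivAt_iteratedDeriv hS j ht
  have hgi := hg.hasDerivAt_iteratedDeriv hS i ht
  have hgj := hg.hasDerivAt_iteratedDeriv hS j ht
  exact ((hfi.mul hgj).sub (hfj.mul hgi)).congr_deriv (by simp only [wronskian]; ring)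

theorem deriv_wronskian_zero_one (hS : IsOpen S) (hf : ContDiffOn ℝ (⊤ : ℕ∞) f S)
    (hg : ContDiffOn ℝ (⊤ : ℕ∞) g S) : EqOn (deriv (wronskian 0 1 f g)) (wronskian 0 2 f g) S :=
  fun t ht => by
    rw [(hasDerivAt_wronskian hS hf hg 0 1 ht).deriv, wronskian_self, Pi.zero_apply, zero_add]

theorem iteratedDeriv_two_wronskian_zero_one (hS : IsOpen S) (hf : ContDiffOn ℝ (⊤ : ℕ∞) f S)
    (hg : ContDiffOn ℝ (⊤ : ℕ∞) g S) :
    EqOn (iteratedDeriv 2 (wronskian 0 1 f g)) (wronskian 0 3 f g + wronskian 1 2 f g) S :=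
  fun t ht => by
    rw [iteratedDeriv_succ, iteratedDeriv_one,
      ((deriv_wronskian_zero_one hS hf hg).eventuallyEq_of_mem (hS.mem_nhds ht)).deriv_eq,
      (hasDerivAt_wronskian hS hf hg 0 2 ht).deriv, Pi.add_apply, add_comm]

theorem iteratedDeriv_three_wronskian_zero_one (hS : IsOpen S) (hf : ContDiffOn ℝ (⊤ : ℕ∞) f S)
    (hg : ContDiffOn ℝ (⊤ : ℕ∞) g S) (ht : t ∈ S) :
    iteratedDeriv 3 (wronskian 0 1 f g) t = wronskian 0 4 f g t + 2 * wronskian 1 3 f g t := by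
  have hW := (hasDerivAt_wronskian hS hf hg 0 3 ht).add (hasDerivAt_wronskian hS hf hg 1 2 ht)
  rw [iteratedDeriv_succ, (hW.congr_of_eventuallyEq
    ((iteratedDeriv_two_wronskian_zero_one hS hf hg).eventuallyEq_of_mem (hS.mem_nhds ht))).deriv,
    wronskian_self]
  simp only [Nat.reduceAdd, zero_add, Pi.zero_apply]
  ring

variable {a₀ a₁ a₂ a₃ : ℝ → ℝ}

theorem wronskian_four_of_ode
    (hfsol : iteratedDeriv 4 f t + a₃ t * iteratedDeriv 3 f t + a₂ t * iteratedDeriv 2 f t +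
      a₁ t * deriv f t + a₀ t * f t = 0)
    (hgsol : iteratedDeriv 4 g t + a₃ t * iteratedDeriv 3 g t + a₂ t * iteratedDeriv 2 g t +
      a₁ t * deriv g t + a₀ t * g t = 0) (i : ℕ) :
    wronskian i 4 f g t = -(a₃ t * wronskian i 3 f g t + a₂ t * wronskian i 2 f g t +
      a₁ t * wronskian i 1 f g t + a₀ t * wronskian i 0 f g t) := by
  simp only [wronskian, iteratedDeriv_one, iteratedDeriv_zero]
  linear_combination iteratedDeriv i f t * hgsol - iteratedDeriv i g t * hfsol

theorem wronskian_ode_combination_eqOn (hS : IsOpen S) (hf : ContDiffOn ℝ (⊤ : ℕ∞) f S)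
    (hg : ContDiffOn ℝ (⊤ : ℕ∞) g S)
    (hfsol : ∀ t ∈ S, iteratedDeriv 4 f t + a₃ t * iteratedDeriv 3 f t +
      a₂ t * iteratedDeriv 2 f t + a₁ t * deriv f t + a₀ t * f t = 0)
    (hgsol : ∀ t ∈ S, iteratedDeriv 4 g t + a₃ t * iteratedDeriv 3 g t +
      a₂ t * iteratedDeriv 2 g t + a₁ t * deriv g t + a₀ t * g t = 0) :
    EqOn (fun t => iteratedDeriv 3 (wronskian 0 1 f g) t +
        a₃ t * iteratedDeriv 2 (wronskian 0 1 f g) t +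
        a₂ t * deriv (wronskian 0 1 f g) t + a₁ t * wronskian 0 1 f g t)
      (fun t => a₃ t * wronskian 1 2 f g t + 2 * wronskian 1 3 f g t) S := fun t ht => by
  simp only
  rw [iteratedDeriv_three_wronskian_zero_one hS hf hg ht,
    iteratedDeriv_two_wronskian_zero_one hS hf hg ht, deriv_wronskian_zero_one hS hf hg ht,
    wronskian_four_of_ode (hfsol t ht) (hgsol t ht), wronskian_self, Pi.add_apply,
    Pi.zero_apply]
  ring

theorem deriv_wronskian_ode_combination (hS : IsOpen S) (hf : ContDiffOn ℝ (⊤ : ℕ∞) f S)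
    (hg : ContDiffOn ℝ (⊤ : ℕ∞) g S) (ha₃ : DifferentiableAt ℝ a₃ t)
    (hfsol : iteratedDeriv 4 f t + a₃ t * iteratedDeriv 3 f t + a₂ t * iteratedDeriv 2 f t +
      a₁ t * deriv f t + a₀ t * f t = 0)
    (hgsol : iteratedDeriv 4 g t + a₃ t * iteratedDeriv 3 g t + a₂ t * iteratedDeriv 2 g t +
      a₁ t * deriv g t + a₀ t * g t = 0) (ht : t ∈ S) :
    deriv (fun s => a₃ s * wronskian 1 2 f g s + 2 * wronskian 1 3 f g s) t =
      (deriv a₃ t - 2 * a₂ t) * wronskian 1 2 f g t - a₃ t * wronskian 1 3 f g t +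
        2 * a₀ t * wronskian 0 1 f g t + 2 * wronskian 2 3 f g t := by
  rw [((ha₃.hasDerivAt.fun_mul (hasDerivAt_wronskian hS hf hg 1 2 ht)).fun_add
    ((hasDerivAt_wronskian hS hf hg 1 3 ht).const_mul 2)).deriv,
    wronskian_four_of_ode hfsol hgsol, wronskian_self, wronskian_self, wronskian_swap 0 1]
  simp only [Nat.reduceAdd, Pi.zero_apply, Pi.neg_apply]
  ring

end Wronskian

theorem stmt_11_general (A B : ℝ)
    (a₀ a₁ a₂ a₃ f g : ℝ → ℝ)
    (ha₃ : ContDiffOn ℝ (⊤ : ℕ∞) a₃ (Set.Ioo A B))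
    (hf : ContDiffOn ℝ (⊤ : ℕ∞) f (Set.Ioo A B))
    (hg : ContDiffOn ℝ (⊤ : ℕ∞) g (Set.Ioo A B))
    (hfsol : ∀ t ∈ Set.Ioo A B, iteratedDeriv 4 f t + a₃ t * iteratedDeriv 3 f t +
      a₂ t * iteratedDeriv 2 f t + a₁ t * deriv f t + a₀ t * f t = 0)
    (hgsol : ∀ t ∈ Set.Ioo A B, iteratedDeriv 4 g t + a₃ t * iteratedDeriv 3 g t +
      a₂ t * iteratedDeriv 2 g t + a₁ t * deriv g t + a₀ t * g t = 0)
    (u₁ u₄ u₅ u₆ : ℝ → ℝ)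
    (hu₁ : u₁ = fun t => f t * deriv g t - deriv f t * g t)
    (hu₄ : u₄ = fun t => deriv f t * iteratedDeriv 2 g t - iteratedDeriv 2 f t * deriv g t)
    (hu₅ : u₅ = fun t => deriv f t * iteratedDeriv 3 g t - iteratedDeriv 3 f t * deriv g t)
    (hu₆ : u₆ = fun t => iteratedDeriv 2 f t * iteratedDeriv 3 g t -
      iteratedDeriv 3 f t * iteratedDeriv 2 g t)
    (U C₁ : ℝ → ℝ)
    (hU : U = fun t => iteratedDeriv 3 u₁ t + a₃ t * iteratedDeriv 2 u₁ t +
      a₂ t * deriv u₁ t + a₁ t * u₁ t)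
    (hC₁ : C₁ = fun t => deriv a₃ t + (1 / 2) * (a₃ t) ^ 2 - 2 * a₂ t) :
    ∀ t ∈ Set.Ioo A B,
      U t = a₃ t * u₄ t + 2 * u₅ t ∧
      deriv U t + (1 / 2) * a₃ t * U t = C₁ t * u₄ t + 2 * a₀ t * u₁ t + 2 * u₆ t := by
  have hS : IsOpen (Ioo A B) := isOpen_Ioo
  obtain rfl : u₁ = wronskian 0 1 f g := by rw [hu₁]; ext; simp [wronskian]
  obtain rfl : u₄ = wronskian 1 2 f g := by rw [hu₄]; ext; simp [wronskian]
  obtain rfl : u₅ = wronskian 1 3 f g := by rw [hu₅]; ext; simp [wronskian]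
  obtain rfl : u₆ = wronskian 2 3 f g := by rw [hu₆]; ext; simp [wronskian]
  subst hU hC₁
  have hUeq := wronskian_ode_combination_eqOn hS hf hg hfsol hgsol
  intro t ht
  have ha₃t : DifferentiableAt ℝ a₃ t :=
    (ha₃.differentiableOn (by simp) t ht).differentiableAt (hS.mem_nhds ht)
  rw [(hUeq.eventuallyEq_of_mem (hS.mem_nhds ht)).deriv_eq,
    deriv_wronskian_ode_combination hS hf hg ha₃t (hfsol t ht) (hgsol t ht) ht, hUeq ht]
  exact ⟨rfl, by ring⟩

/-- For two smooth solutions of `y'''' + a₃y''' + a₂y'' + a₁y' + a₀y = 0` with Wronskians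
`u₁,…,u₆`, setting `U = u₁‴ + a₃u₁″ + a₂u₁′ + a₁u₁` and `C₁ = a₃′ + (1/2)a₃² − 2a₂`, one has
`U = a₃u₄ + 2u₅` and `U′ + (1/2)a₃U = C₁u₄ + 2a₀u₁ + 2u₆`. -/
theorem stmt_11 (A B : ℝ)
    (a₀ a₁ a₂ a₃ f g : ℝ → ℝ)
    (ha₀ : ContDiffOn ℝ (⊤ : ℕ∞) a₀ (Set.Ioo A B))
    (ha₁ : ContDiffOn ℝ (⊤ : ℕ∞) a₁ (Set.Ioo A B))
    (ha₂ : ContDiffOn ℝ (⊤ : ℕ∞) a₂ (Set.Ioo A B))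
    (ha₃ : ContDiffOn ℝ (⊤ : ℕ∞) a₃ (Set.Ioo A B))
    (hf : ContDiffOn ℝ (⊤ : ℕ∞) f (Set.Ioo A B))
    (hg : ContDiffOn ℝ (⊤ : ℕ∞) g (Set.Ioo A B))
    (hfsol : ∀ t ∈ Set.Ioo A B, iteratedDeriv 4 f t + a₃ t * iteratedDeriv 3 f t +
      a₂ t * iteratedDeriv 2 f t + a₁ t * deriv f t + a₀ t * f t = 0)
    (hgsol : ∀ t ∈ Set.Ioo A B, iteratedDeriv 4 g t + a₃ t * iteratedDeriv 3 g t +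
      a₂ t * iteratedDeriv 2 g t + a₁ t * deriv g t + a₀ t * g t = 0)
    (u₁ u₄ u₅ u₆ : ℝ → ℝ)
    (hu₁ : u₁ = fun t => f t * deriv g t - deriv f t * g t)
    (hu₄ : u₄ = fun t => deriv f t * iteratedDeriv 2 g t - iteratedDeriv 2 f t * deriv g t)
    (hu₅ : u₅ = fun t => deriv f t * iteratedDeriv 3 g t - iteratedDeriv 3 f t * deriv g t)
    (hu₆ : u₆ = fun t => iteratedDeriv 2 f t * iteratedDeriv 3 g t -
      iteratedDeriv 3 f t * iteratedDeriv 2 g t)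
    (U C₁ : ℝ → ℝ)
    (hU : U = fun t => iteratedDeriv 3 u₁ t + a₃ t * iteratedDeriv 2 u₁ t +
      a₂ t * deriv u₁ t + a₁ t * u₁ t)
    (hC₁ : C₁ = fun t => deriv a₃ t + (1 / 2) * (a₃ t) ^ 2 - 2 * a₂ t) :
    ∀ t ∈ Set.Ioo A B,
      U t = a₃ t * u₄ t + 2 * u₅ t ∧
      deriv U t + (1 / 2) * a₃ t * U t = C₁ t * u₄ t + 2 * a₀ t * u₁ t + 2 * u₆ t :=
  stmt_11_general A B a₀ a₁ a₂ a₃ f g ha₃ hf hg hfsol hgsol u₁ u₄ u₅ u₆ hu₁ hu₄ hu₅ hu₆ U C₁ hU hC₁
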